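/- arXiv:1307.3881 — 3 statements merged into one kernel-verified Lean document; each statement's English description precedes it below -/
import Mathlib

section
/- Let D be a linearly connected digraph with strong components D_1, ..., D_η, and suppose the component D_i is nontrivial. If a vertex x of D has an m-step prey belonging to V_i for some positive integer m, then: (1) for every integer m' ≥ m, x has an m'-step prey belonging to V_i; and (2) every vertex of V_i is a k-step prey of x for some positive integer k. -/
/-!
In a nontrivial strong component every vertex has an out-neighbour inside the component
(the first arc of a walk to another vertex), so a walk that reaches the component can be
prolonged one arc at a time without leaving it. Strong connectivity then lets a walk
reaching one vertex of the component continue to any other.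
-/

/-- A digraph: a finite vertex type with an irreflexive arc relation (no loops). -/
structure Digraph' (V : Type*) where
  Adj : V → V → Prop
  irrefl : ∀ v, ¬ Adj v v

namespace Digraph'

variable {V : Type*}

/-- There is a directed walk of length `m` from `x` to `y` in `D`;
i.e. `y` is an `m`-step prey of `x`. -/
def HasWalk (D : Digraph' V) (m : ℕ) (x y : V) : Prop :=
  ∃ f : ℕ → V, f 0 = x ∧ f m = y ∧ ∀ t, t < m → D.Adj (f t) (f (t + 1))

/-- There is a directed walk of length `m` from `x` to `y` staying inside `S`. -/
def HasWalkIn (D : Digraph' V) (S : Set V) (m : ℕ) (x y : V) : Prop :=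
  ∃ f : ℕ → V, f 0 = x ∧ f m = y ∧ (∀ t, t ≤ m → f t ∈ S) ∧
    ∀ t, t < m → D.Adj (f t) (f (t + 1))

/-- The `m`-step competition graph `C(D^m)` of `D`. -/
def compGraph (D : Digraph' V) (m : ℕ) : SimpleGraph V where
  Adj u v := u ≠ v ∧ ∃ z, D.HasWalk m u z ∧ D.HasWalk m v z
  symm := by
    constructor
    rintro u v ⟨hne, z, h1, h2⟩
    exact ⟨hne.symm, z, h2, h1⟩
  loopless := ⟨fun v h => h.1 rfl⟩

/-- The sequence `{C(D^m)}_{m ≥ 1}` converges. -/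
def CompConverges (D : Digraph' V) : Prop :=
  ∃ N : ℕ, 1 ≤ N ∧ ∀ m, N ≤ m → D.compGraph m = D.compGraph N

/-- The sequence `{C(D^m)}_{m ≥ 1}` converges to the graph `G`. -/
def CompConvergesTo (D : Digraph' V) (G : SimpleGraph V) : Prop :=
  ∃ N : ℕ, 1 ≤ N ∧ ∀ m, N ≤ m → D.compGraph m = G

/-- `D` is linearly connected with strong components `Vset 1, …, Vset η`. -/
structure IsLinConn (D : Digraph' V) (η : ℕ) (Vset : ℕ → Set V) : Prop where
  nonempty : ∀ i, 1 ≤ i → i ≤ η → (Vset i).Nonempty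
  cover : ∀ v : V, ∃ i, 1 ≤ i ∧ i ≤ η ∧ v ∈ Vset i
  disjoint' : ∀ i j, 1 ≤ i → i ≤ η → 1 ≤ j → j ≤ η →
      ∀ v : V, v ∈ Vset i → v ∈ Vset j → i = j
  strong : ∀ i, 1 ≤ i → i ≤ η → ∀ x ∈ Vset i, ∀ y ∈ Vset i,
      ∃ m, D.HasWalkIn (Vset i) m x y
  arcs : ∀ x y : V, D.Adj x y → ∃ i, 1 ≤ i ∧
      ((i ≤ η ∧ x ∈ Vset i ∧ y ∈ Vset i) ∨
       (i + 1 ≤ η ∧ x ∈ Vset i ∧ y ∈ Vset (i + 1)))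
  linked : ∀ i, 1 ≤ i → i + 1 ≤ η → ∃ x ∈ Vset i, ∃ y ∈ Vset (i + 1), D.Adj x y

/-- A component with vertex set `S` is trivial if `S` is a singleton. -/
def IsTrivialComp (S : Set V) : Prop := ∃ v : V, S = {v}

/-- `κ` is the index of imprimitivity of the (strong) component with vertex set `S`:
the gcd of the lengths of all closed directed walks inside `S`. -/
def IsImprimIndex (D : Digraph' V) (S : Set V) (κ : ℕ) : Prop :=
  (∀ (x : V) (m : ℕ), x ∈ S → 0 < m → D.HasWalkIn S m x x → κ ∣ m) ∧
  ∀ d : ℕ, (∀ (x : V) (m : ℕ), x ∈ S → 0 < m → D.HasWalkIn S m x x → d ∣ m) → d ∣ κ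

/-- `u` is an imprimitivity labelling on `S`: along any arc inside `S` the label
increases by one.  Its fibers are the sets of imprimitivity. -/
def IsImprimLabelling (D : Digraph' V) (S : Set V) {κ : ℕ} (u : V → ZMod κ) : Prop :=
  ∀ x ∈ S, ∀ y ∈ S, D.Adj x y → u y = u x + 1

/-- `(k, l) ∈ I(D_{p,p+1})`: some arc goes from a vertex of `U_k^{(p)}` to a vertex of
`U_l^{(p+1)}`. -/
def InI (D : Digraph' V) (Vset : ℕ → Set V) {κ : ℕ → ℕ}
    (u : ∀ i : ℕ, V → ZMod (κ i)) (p : ℕ) (k : ZMod (κ p)) (l : ZMod (κ (p + 1))) : Prop :=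
  ∃ x ∈ Vset p, ∃ y ∈ Vset (p + 1), D.Adj x y ∧ u p x = k ∧ u (p + 1) y = l

/-- `(i, j)` is an edge of the bipartite graph `B_{p,p+1}`. -/
def BAdj (D : Digraph' V) (Vset : ℕ → Set V) {κ : ℕ → ℕ}
    (u : ∀ i : ℕ, V → ZMod (κ i)) (p : ℕ) (i : ZMod (κ p)) (j : ZMod (κ (p + 1))) : Prop :=
  ∃ (k : ZMod (κ p)) (l : ZMod (κ (p + 1))) (a : ℤ),
    InI D Vset u p k l ∧ i = k + 1 + (a : ZMod (κ p)) ∧ j = l + (a : ZMod (κ (p + 1)))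

/-- The competition skeleton graph (CS-graph) `PT_D^{(η)}`: vertices are pairs `⟨r, i⟩`
with `i ∈ ZMod (κ r)` (only `1 ≤ r ≤ η` carries edges); `⟨p, i⟩` and `⟨p+1, j⟩` are
adjacent exactly when `i` and `j` are adjacent in `B_{p,p+1}`. -/
def csGraph (D : Digraph' V) (Vset : ℕ → Set V) {κ : ℕ → ℕ}
    (u : ∀ i : ℕ, V → ZMod (κ i)) (η : ℕ) : SimpleGraph ((r : ℕ) × ZMod (κ r)) where
  Adj a b := ∃ p, 1 ≤ p ∧ p + 1 ≤ η ∧ ∃ (i : ZMod (κ p)) (j : ZMod (κ (p + 1))),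
    BAdj D Vset u p i j ∧
    ((a = ⟨p, i⟩ ∧ b = ⟨p + 1, j⟩) ∨ (a = ⟨p + 1, j⟩ ∧ b = ⟨p, i⟩))
  symm := by
    constructor
    rintro a b ⟨p, h1, h2, i, j, hB, hab⟩
    exact ⟨p, h1, h2, i, j, hB,
      hab.elim (fun h => Or.inr ⟨h.2, h.1⟩) (fun h => Or.inl ⟨h.2, h.1⟩)⟩
  loopless := by
    constructor
    rintro a ⟨p, _, _, i, j, _, hab⟩
    rcases hab with ⟨ha, hb⟩ | ⟨ha, hb⟩
    · have h : p = p + 1 := congrArg Sigma.fst (ha.symm.trans hb)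
      omega
    · have h : p + 1 = p := congrArg Sigma.fst (ha.symm.trans hb)
      omega

end Digraph'

namespace Digraph'

variable {V : Type*} {D : Digraph' V}

theorem hasWalk_zero {x y : V} : D.HasWalk 0 x y ↔ x = y :=
  ⟨fun ⟨_, h0, h1, _⟩ => h0.symm.trans h1, fun h => ⟨fun _ => x, rfl, h, by simp⟩⟩

theorem HasWalk.snoc {m : ℕ} {x y z : V} (h : D.HasWalk m x y) (hyz : D.Adj y z) :
    D.HasWalk (m + 1) x z := by
  obtain ⟨f, hf0, hfm, hadj⟩ := h
  refine ⟨Function.update f (m + 1) z, by simpa using hf0, by simp, fun t ht => ?_⟩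
  rcases Nat.lt_succ_iff_lt_or_eq.1 ht with ht | rfl
  · rw [Function.update_of_ne (by omega), Function.update_of_ne (by omega)]
    exact hadj t ht
  · rw [Function.update_of_ne (by omega), Function.update_self, hfm]
    exact hyz

theorem HasWalk.exists_snoc {m : ℕ} {x z : V} (h : D.HasWalk (m + 1) x z) :
    ∃ y, D.HasWalk m x y ∧ D.Adj y z := by
  obtain ⟨f, hf0, hfm, hadj⟩ := h
  exact ⟨f m, ⟨f, hf0, rfl, fun t ht => hadj t (by omega)⟩, hfm ▸ hadj m (by omega)⟩

theorem HasWalk.append {m n : ℕ} {x y w : V} (h₁ : D.HasWalk m x y) (h₂ : D.HasWalk n y w) :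
    D.HasWalk (m + n) x w := by
  induction n generalizing w with
  | zero => exact hasWalk_zero.1 h₂ ▸ h₁
  | succ n ih =>
    obtain ⟨v, hv, hvw⟩ := h₂.exists_snoc
    exact (ih hv).snoc hvw

theorem HasWalkIn.hasWalk {S : Set V} {m : ℕ} {x y : V} (h : D.HasWalkIn S m x y) :
    D.HasWalk m x y :=
  let ⟨f, hf0, hfm, _, hadj⟩ := h
  ⟨f, hf0, hfm, hadj⟩

theorem HasWalkIn.exists_adj_of_ne {S : Set V} {m : ℕ} {x y : V} (h : D.HasWalkIn S m x y)
    (hxy : x ≠ y) : ∃ z ∈ S, D.Adj x z := by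
  obtain ⟨f, hf0, hfm, hfS, hadj⟩ := h
  have hm : 0 < m := Nat.pos_of_ne_zero fun hm => hxy (hf0 ▸ hm ▸ hfm)
  exact ⟨f 1, hfS 1 hm, hf0 ▸ hadj 0 hm⟩

theorem exists_ne_of_not_isTrivialComp {S : Set V} (hS : ¬ IsTrivialComp S) {v : V}
    (hv : v ∈ S) : ∃ z ∈ S, z ≠ v := by
  by_contra! h
  exact hS ⟨v, Set.eq_singleton_iff_unique_mem.2 ⟨hv, h⟩⟩

theorem IsLinConn.exists_adj_of_not_isTrivialComp {η : ℕ} {Vset : ℕ → Set V}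
    (hD : D.IsLinConn η Vset) {i : ℕ} (hi1 : 1 ≤ i) (hiη : i ≤ η)
    (hnt : ¬ IsTrivialComp (Vset i)) {v : V} (hv : v ∈ Vset i) :
    ∃ z ∈ Vset i, D.Adj v z := by
  obtain ⟨z, hz, hzv⟩ := exists_ne_of_not_isTrivialComp hnt hv
  obtain ⟨_, hwalk⟩ := hD.strong i hi1 hiη v hv z hz
  exact hwalk.exists_adj_of_ne hzv.symm

theorem HasWalk.exists_mem_of_le {S : Set V} (hS : ∀ v ∈ S, ∃ z ∈ S, D.Adj v z)
    {m : ℕ} {x y : V} (hy : y ∈ S) (hw : D.HasWalk m x y) {m' : ℕ} (hm' : m ≤ m') :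
    ∃ y' ∈ S, D.HasWalk m' x y' := by
  induction m', hm' using Nat.le_induction with
  | base => exact ⟨y, hy, hw⟩
  | succ n _ ih =>
    obtain ⟨y', hy', hw'⟩ := ih
    obtain ⟨z, hz, hy'z⟩ := hS y' hy'
    exact ⟨z, hz, hw'.snoc hy'z⟩

end Digraph'

open Digraph' in
theorem stmt0_general {V : Type*} (D : Digraph' V) (η : ℕ) (Vset : ℕ → Set V)
    (hD : D.IsLinConn η Vset) (i : ℕ) (hi1 : 1 ≤ i) (hiη : i ≤ η)
    (hnt : ¬ IsTrivialComp (Vset i))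
    (x y : V) (m : ℕ) (hm : 1 ≤ m) (hy : y ∈ Vset i) (hw : D.HasWalk m x y) :
    (∀ m', m ≤ m' → ∃ y' ∈ Vset i, D.HasWalk m' x y') ∧
    (∀ w ∈ Vset i, ∃ k, 1 ≤ k ∧ D.HasWalk k x w) := by
  refine ⟨fun m' hm' => ?_, fun w hw' => ?_⟩
  · exact hw.exists_mem_of_le
      (fun v hv => hD.exists_adj_of_not_isTrivialComp hi1 hiη hnt hv) hy hm'
  · obtain ⟨n, hyw⟩ := hD.strong i hi1 hiη y hy w hw'
    exact ⟨m + n, by omega, hw.append hyw.hasWalk⟩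

open Digraph' in
/-- if `x` has an `m`-step prey in the nontrivial strong component `D_i`,
then `x` has an `m'`-step prey in `D_i` for every `m' ≥ m`, and every vertex of `D_i`
is a `k`-step prey of `x` for some positive `k`. -/
theorem stmt0 {V : Type*} [Fintype V] (D : Digraph' V) (η : ℕ) (Vset : ℕ → Set V)
    (hD : D.IsLinConn η Vset) (i : ℕ) (hi1 : 1 ≤ i) (hiη : i ≤ η)
    (hnt : ¬ IsTrivialComp (Vset i))
    (x y : V) (m : ℕ) (hm : 1 ≤ m) (hy : y ∈ Vset i) (hw : D.HasWalk m x y) :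
    (∀ m', m ≤ m' → ∃ y' ∈ Vset i, D.HasWalk m' x y') ∧
    (∀ w ∈ Vset i, ∃ k, 1 ≤ k ∧ D.HasWalk k x w) :=
  stmt0_general D η Vset hD i hi1 hiη hnt x y m hm hy hw
end

section
/- Let D be a linearly connected digraph with η ≥ 3 strong components, all nontrivial. Let p and q be indices with p + 2 ≤ q ≤ η, let x ∈ U_i^{(p)} and z ∈ U_k^{(q)}. If D has a directed (x,z)-walk of length s·κ_{p+1}κ_{p+2}···κ_q for some positive integer s, then the vertices (p, i) and (q, k) of the CS-graph PT_D^{(η)} are joined by a path in PT_D^{(η)}. -/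
/-!
Along a walk of length `m` from `x ∈ V_p` to `z ∈ V_q`, the vertices `(p, u_p x + b)` and
`(q, u_q z + b - m)` of the CS-graph are joined for every integer `b`. By induction on `m`: an
arc inside a component raises the label by one, and an arc `x → y` from `V_p` to `V_{p+1}` puts
`(u_p x, u_{p+1} y)` in `I(D_{p,p+1})`, so `(p, u_p x + b)` is adjacent to
`(p + 1, u_{p+1} y + b - 1)`. When `κ_q` divides `m`, the shift `-m` vanishes in `ZMod κ_q`.
-/

namespace Digraph'

variable {V : Type*} {D : Digraph' V}

theorem HasWalk.eq_of_zero {x y : V} (h : D.HasWalk 0 x y) : x = y := by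
  obtain ⟨f, hf0, hf, -⟩ := h
  rw [← hf0, hf]

theorem HasWalk.exists_adj_of_succ {m : ℕ} {x z : V} (h : D.HasWalk (m + 1) x z) :
    ∃ y, D.Adj x y ∧ D.HasWalk m y z := by
  obtain ⟨f, hf0, hfm, hadj⟩ := h
  exact ⟨f 1, hf0 ▸ hadj 0 m.succ_pos,
    fun t => f (t + 1), rfl, hfm, fun t ht => hadj (t + 1) (by omega)⟩

variable {η : ℕ} {Vset : ℕ → Set V}

theorem IsLinConn.mem_or_mem_succ_of_adj (hD : D.IsLinConn η Vset) {p : ℕ} (hp : 1 ≤ p)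
    (hpη : p ≤ η) {x y : V} (hx : x ∈ Vset p) (hxy : D.Adj x y) :
    y ∈ Vset p ∨ (p + 1 ≤ η ∧ y ∈ Vset (p + 1)) := by
  obtain ⟨r, hr, ⟨hrη, hxr, hyr⟩ | ⟨hrη, hxr, hyr⟩⟩ := hD.arcs x y hxy
  · obtain rfl := hD.disjoint' r p hr hrη hp hpη x hxr hx
    exact Or.inl hyr
  · obtain rfl := hD.disjoint' r p hr (by omega) hp hpη x hxr hx
    exact Or.inr ⟨hrη, hyr⟩

variable {κ : ℕ → ℕ} {u : ∀ i : ℕ, V → ZMod (κ i)}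

theorem csGraph_adj_of_adj {p : ℕ} (hp : 1 ≤ p) (hpη : p + 1 ≤ η) {x y : V}
    (hx : x ∈ Vset p) (hy : y ∈ Vset (p + 1)) (hxy : D.Adj x y) (b : ℤ) :
    (csGraph D Vset u η).Adj ⟨p, u p x + b⟩ ⟨p + 1, u (p + 1) y + ((b - 1 : ℤ) : ZMod _)⟩ :=
  ⟨p, hp, hpη, _, _, ⟨u p x, u (p + 1) y, b - 1, ⟨x, hx, y, hy, hxy, rfl, rfl⟩,
    by push_cast; ring, rfl⟩, Or.inl ⟨rfl, rfl⟩⟩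

theorem reachable_of_hasWalk (hD : D.IsLinConn η Vset)
    (hu : ∀ i, 1 ≤ i → i ≤ η → IsImprimLabelling D (Vset i) (u i))
    {m p q : ℕ} {x z : V} (hp : 1 ≤ p) (hpη : p ≤ η) (hq : 1 ≤ q) (hqη : q ≤ η)
    (hx : x ∈ Vset p) (hz : z ∈ Vset q) (hw : D.HasWalk m x z) (b : ℤ) :
    (csGraph D Vset u η).Reachable ⟨p, u p x + b⟩ ⟨q, u q z + ((b - m : ℤ) : ZMod _)⟩ := by
  induction m generalizing p x b with
  | zero =>
    obtain rfl := hw.eq_of_zero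
    obtain rfl := hD.disjoint' p q hp hpη hq hqη x hx hz
    simp
  | succ m ih =>
    obtain ⟨y, hxy, hyz⟩ := hw.exists_adj_of_succ
    have hshift : b - (m + 1 : ℕ) = b - 1 - m := by push_cast; ring
    rw [hshift]
    rcases hD.mem_or_mem_succ_of_adj hp hpη hx hxy with hy | ⟨hpη', hy⟩
    · have hlabel : u p x + (b : ZMod (κ p)) = u p y + ((b - 1 : ℤ) : ZMod _) := by
        rw [hu p hp hpη x hx y hy hxy]; push_cast; ring
      rw [hlabel]
      exact ih hp hpη hy hyz (b - 1)
    · exact (csGraph_adj_of_adj hp hpη' hx hy hxy b).reachable.trans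
        (ih (by omega) hpη' hy hyz (b - 1))

end Digraph'

open Digraph' in
theorem stmt7_general {V : Type*} (D : Digraph' V) (η : ℕ) (Vset : ℕ → Set V)
    (hD : D.IsLinConn η Vset)
    (κ : ℕ → ℕ) (u : ∀ i : ℕ, V → ZMod (κ i))
    (hu : ∀ i, 1 ≤ i → i ≤ η → IsImprimLabelling D (Vset i) (u i))
    (p q : ℕ) (hp : 1 ≤ p) (hpq : p + 2 ≤ q) (hq : q ≤ η)
    (i : ZMod (κ p)) (k : ZMod (κ q)) (x z : V)
    (hx : x ∈ Vset p) (hxi : u p x = i) (hz : z ∈ Vset q) (hzk : u q z = k)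
    (s : ℕ)
    (hw : D.HasWalk (s * ∏ r ∈ Finset.Icc (p + 1) q, κ r) x z) :
    (csGraph D Vset u η).Reachable ⟨p, i⟩ ⟨q, k⟩ := by
  have hdvd : (κ q : ℤ) ∣ ((s * ∏ r ∈ Finset.Icc (p + 1) q, κ r : ℕ) : ℤ) :=
    Int.natCast_dvd_natCast.mpr
      ((Finset.dvd_prod_of_mem κ (Finset.mem_Icc.mpr ⟨by omega, le_rfl⟩)).mul_left s)
  have hR := reachable_of_hasWalk hD hu hp (by omega) (by omega) hq hx hz hw 0
  rwa [zero_sub, Int.cast_neg, (ZMod.intCast_zmod_eq_zero_iff_dvd _ _).mpr hdvd, neg_zero,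
    add_zero, Int.cast_zero, add_zero, hxi, hzk] at hR

open Digraph' in
/-- if there is an `(x,z)`-walk of length `s·κ_{p+1}···κ_q` with
`x ∈ U_i^{(p)}`, `z ∈ U_k^{(q)}`, `p + 2 ≤ q ≤ η`, then `(p,i)` and `(q,k)` are joined
by a path in the CS-graph `PT_D^{(η)}`. -/
theorem stmt7 {V : Type*} [Fintype V] (D : Digraph' V) (η : ℕ) (Vset : ℕ → Set V)
    (hD : D.IsLinConn η Vset) (hη : 3 ≤ η)
    (hnt : ∀ i, 1 ≤ i → i ≤ η → ¬ IsTrivialComp (Vset i))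
    (κ : ℕ → ℕ) (u : ∀ i : ℕ, V → ZMod (κ i))
    (hκ : ∀ i, 1 ≤ i → i ≤ η → IsImprimIndex D (Vset i) (κ i))
    (hu : ∀ i, 1 ≤ i → i ≤ η → IsImprimLabelling D (Vset i) (u i))
    (p q : ℕ) (hp : 1 ≤ p) (hpq : p + 2 ≤ q) (hq : q ≤ η)
    (i : ZMod (κ p)) (k : ZMod (κ q)) (x z : V)
    (hx : x ∈ Vset p) (hxi : u p x = i) (hz : z ∈ Vset q) (hzk : u q z = k)
    (s : ℕ) (hs : 1 ≤ s)
    (hw : D.HasWalk (s * ∏ r ∈ Finset.Icc (p + 1) q, κ r) x z) :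
    (csGraph D Vset u η).Reachable ⟨p, i⟩ ⟨q, k⟩ :=
  stmt7_general D η Vset hD κ u hu p q hp hpq hq i k x z hx hxi hz hzk s hw
end

section
/- Let D be a linearly connected digraph with η ≥ 2 strong components, all nontrivial. Suppose that κ_η divides κ_p for every p = 1, ..., η−1, and that for every p = 1, ..., η−1 and all (i, j), (i', j') ∈ I(D_{p,p+1}) one has red(i) − red(j) = red(i') − red(j') in ZMod κ_η, where red denotes the natural reduction homomorphisms ZMod κ_p → ZMod κ_η and ZMod κ_{p+1} → ZMod κ_η (well defined since κ_η divides κ_p and κ_{p+1}). Then for every r ∈ {1, ..., η} and all x, y ∈ ZMod κ_r, the following are equivalent: (a) there exists k ∈ ZMod κ_η such that (r, x) and (η, k) are joined by a path in the CS-graph PT_D^{(η)} and (r, y) and (η, k) are joined by a path in PT_D^{(η)}; (b) red(x) = red(y) in ZMod κ_η. -/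
/-!
Attach to every vertex `⟨s, z⟩` of the CS-graph the potential `red z + c 1 + ⋯ + c (s - 1)` in
`ZMod κ_η`, where `c p` is the common value of `red k + 1 - red l` over `(k, l) ∈ I(D_{p,p+1})`
(it is well defined by the hypothesis on differences). Since an edge of `B_{p,p+1}` shifts an arc
`(k, l)` to `(k + 1 + a, l + a)`, the potential is constant along edges, hence on connected
components; this gives (a) → (b), the potential being `red` plus a fixed constant on level `r`.
Conversely every vertex on level `p < η` has a neighbour on level `p + 1`, so both `(r, x)` and
`(r, y)` reach level `η`, and there the potential is injective.
-/

theorem ZMod.natCast_val_eq_castHom {m n : ℕ} [NeZero n] (h : m ∣ n) (z : ZMod n) :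
    (z.val : ZMod m) = ZMod.castHom h (ZMod m) z := by
  rw [ZMod.castHom_apply, ZMod.natCast_val]

namespace Digraph'

variable {V : Type*} {D : Digraph' V}

theorem HasWalkIn.append {S : Set V} {m₁ m₂ : ℕ} {x y z : V} (h₁ : D.HasWalkIn S m₁ x y)
    (h₂ : D.HasWalkIn S m₂ y z) : D.HasWalkIn S (m₁ + m₂) x z := by
  obtain ⟨f, hf0, hfm, hfS, hfA⟩ := h₁
  obtain ⟨g, hg0, hgm, hgS, hgA⟩ := h₂
  set w : ℕ → V := fun t => if t ≤ m₁ then f t else g (t - m₁)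
  have hw : ∀ t, m₁ ≤ t → w t = g (t - m₁) := by
    intro t ht
    rcases ht.eq_or_lt with rfl | ht
    · simp [w, hfm, hg0]
    · simp [w, ht.not_ge]
  refine ⟨w, by simp [w, hf0], by rw [hw _ (by omega), Nat.add_sub_cancel_left, hgm],
    fun t ht => ?_, fun t ht => ?_⟩
  · by_cases htm : t ≤ m₁
    · simp only [w, if_pos htm]
      exact hfS t htm
    · rw [hw t (by omega)]
      exact hgS _ (by omega)
  · by_cases htm : t < m₁
    · simp only [w, if_pos htm.le, if_pos (Nat.succ_le_of_lt htm)]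
      exact hfA t htm
    · rw [hw t (by omega), hw (t + 1) (by omega), Nat.sub_add_comm (by omega)]
      exact hgA _ (by omega)

theorem IsImprimIndex.pos {S : Set V} {κ : ℕ} (hκ : D.IsImprimIndex S κ) (hS : S.Nontrivial)
    (hstrong : ∀ x ∈ S, ∀ y ∈ S, ∃ m, D.HasWalkIn S m x y) : 0 < κ := by
  obtain ⟨a, ha, b, hb, hab⟩ := hS
  obtain ⟨m₁, hm₁⟩ := hstrong a ha b hb
  obtain ⟨m₂, hm₂⟩ := hstrong b hb a ha
  have hm₁_pos : 0 < m₁ := by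
    obtain ⟨f, hf0, hfm, -⟩ := hm₁
    refine Nat.pos_of_ne_zero fun h => hab ?_
    rw [← hf0, ← hfm, h]
  exact Nat.pos_of_dvd_of_pos (hκ.1 a _ ha (by omega) (hm₁.append hm₂)) (by omega)

section CSGraph

variable {Vset : ℕ → Set V} {κ : ℕ → ℕ} {u : ∀ i : ℕ, V → ZMod (κ i)} {η : ℕ}

theorem exists_csGraph_adj_succ (hD : D.IsLinConn η Vset) {p : ℕ} (hp1 : 1 ≤ p)
    (hp2 : p + 1 ≤ η) (i : ZMod (κ p)) : ∃ j, (csGraph D Vset u η).Adj ⟨p, i⟩ ⟨p + 1, j⟩ := by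
  obtain ⟨x, hx, y, hy, hxy⟩ := hD.linked p hp1 hp2
  obtain ⟨a, ha⟩ := ZMod.intCast_surjective (i - u p x - 1)
  refine ⟨u (p + 1) y + a, p, hp1, hp2, i, _, ?_, Or.inl ⟨rfl, rfl⟩⟩
  exact ⟨u p x, u (p + 1) y, a, ⟨x, hx, y, hy, hxy, rfl, rfl⟩, by rw [ha]; ring, rfl⟩

theorem exists_csGraph_reachable_top (hD : D.IsLinConn η Vset) {p : ℕ} (hp1 : 1 ≤ p)
    (hp2 : p ≤ η) (i : ZMod (κ p)) : ∃ k, (csGraph D Vset u η).Reachable ⟨p, i⟩ ⟨η, k⟩ := by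
  induction hp2 using Nat.decreasingInduction with
  | self => exact ⟨i, .rfl⟩
  | of_succ p hp ih =>
    obtain ⟨j, hij⟩ := exists_csGraph_adj_succ hD hp1 hp i
    obtain ⟨k, hjk⟩ := ih (by omega) j
    exact ⟨k, hij.reachable.trans hjk⟩

theorem exists_InI_offset {n : ℕ} (hD : D.IsLinConn η Vset)
    (hcong : ∀ p, 1 ≤ p → p + 1 ≤ η →
      ∀ (i : ZMod (κ p)) (j : ZMod (κ (p + 1))) (i' : ZMod (κ p)) (j' : ZMod (κ (p + 1))),
        InI D Vset u p i j → InI D Vset u p i' j' →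
        (i.val : ZMod n) - (j.val : ZMod n) = (i'.val : ZMod n) - (j'.val : ZMod n)) :
    ∃ c : ℕ → ZMod n, ∀ p, 1 ≤ p → p + 1 ≤ η →
      ∀ k l, InI D Vset u p k l → (k.val : ZMod n) + 1 - (l.val : ZMod n) = c p := by
  have hI : ∀ p, 1 ≤ p → p + 1 ≤ η → ∃ k l, InI D Vset u p k l := by
    intro p hp1 hp2
    obtain ⟨x, hx, y, hy, hxy⟩ := hD.linked p hp1 hp2
    exact ⟨u p x, u (p + 1) y, x, hx, y, hy, hxy, rfl, rfl⟩
  choose! k₀ l₀ hkl₀ using hI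
  refine ⟨fun p => ((k₀ p).val : ZMod n) + 1 - ((l₀ p).val : ZMod n), fun p hp1 hp2 k l hkl => ?_⟩
  linear_combination hcong p hp1 hp2 k l _ _ hkl (hkl₀ p hp1 hp2)

def csPotential {n : ℕ} (c : ℕ → ZMod n) (v : (s : ℕ) × ZMod (κ s)) : ZMod n :=
  (v.2.val : ZMod n) + ∑ q ∈ Finset.Ico 1 v.1, c q

variable {n : ℕ} {c : ℕ → ZMod n}

theorem csPotential_eq_of_adj (hpos : ∀ p, 1 ≤ p → p ≤ η → 0 < κ p)
    (hdvd : ∀ p, 1 ≤ p → p ≤ η → n ∣ κ p)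
    (hc : ∀ p, 1 ≤ p → p + 1 ≤ η →
      ∀ k l, InI D Vset u p k l → (k.val : ZMod n) + 1 - (l.val : ZMod n) = c p)
    {a b : (s : ℕ) × ZMod (κ s)} (hab : (csGraph D Vset u η).Adj a b) :
    csPotential c a = csPotential c b := by
  obtain ⟨p, hp1, hp2, i, j, ⟨k, l, z, hkl, rfl, rfl⟩, hab⟩ := hab
  have : NeZero (κ p) := ⟨(hpos p hp1 (by omega)).ne'⟩
  have : NeZero (κ (p + 1)) := ⟨(hpos (p + 1) (by omega) hp2).ne'⟩
  have key : csPotential c (⟨p, k + 1 + z⟩ : (s : ℕ) × ZMod (κ s)) =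
      csPotential c (⟨p + 1, l + z⟩ : (s : ℕ) × ZMod (κ s)) := by
    simp only [csPotential, Finset.sum_Ico_succ_top hp1, ← hc p hp1 hp2 k l hkl,
      ZMod.natCast_val_eq_castHom (hdvd p hp1 (by omega)),
      ZMod.natCast_val_eq_castHom (hdvd (p + 1) (by omega) hp2), map_add, map_one, map_intCast]
    ring
  rcases hab with ⟨rfl, rfl⟩ | ⟨rfl, rfl⟩
  · exact key
  · exact key.symm

theorem csPotential_eq_of_reachable (hpos : ∀ p, 1 ≤ p → p ≤ η → 0 < κ p)
    (hdvd : ∀ p, 1 ≤ p → p ≤ η → n ∣ κ p)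
    (hc : ∀ p, 1 ≤ p → p + 1 ≤ η →
      ∀ k l, InI D Vset u p k l → (k.val : ZMod n) + 1 - (l.val : ZMod n) = c p)
    {a b : (s : ℕ) × ZMod (κ s)} (hab : (csGraph D Vset u η).Reachable a b) :
    csPotential c a = csPotential c b := by
  obtain ⟨w⟩ := hab
  induction w with
  | nil => rfl
  | cons hadj _ ih => exact (csPotential_eq_of_adj hpos hdvd hc hadj).trans ih

end CSGraph

end Digraph'

open Digraph' in
theorem stmt10_general {V : Type*} (D : Digraph' V) (η : ℕ) (Vset : ℕ → Set V)
    (hD : D.IsLinConn η Vset)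
    (hnt : ∀ i, 1 ≤ i → i ≤ η → ¬ IsTrivialComp (Vset i))
    (κ : ℕ → ℕ) (u : ∀ i : ℕ, V → ZMod (κ i))
    (hκ : ∀ i, 1 ≤ i → i ≤ η → IsImprimIndex D (Vset i) (κ i))
    (hdvd : ∀ p, 1 ≤ p → p ≤ η → κ η ∣ κ p)
    (hcong : ∀ p, 1 ≤ p → p + 1 ≤ η →
      ∀ (i : ZMod (κ p)) (j : ZMod (κ (p + 1))) (i' : ZMod (κ p)) (j' : ZMod (κ (p + 1))),
        InI D Vset u p i j → InI D Vset u p i' j' →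
        (i.val : ZMod (κ η)) - (j.val : ZMod (κ η)) =
          (i'.val : ZMod (κ η)) - (j'.val : ZMod (κ η)))
    (r : ℕ) (hr1 : 1 ≤ r) (hr2 : r ≤ η) (x y : ZMod (κ r)) :
    (∃ k : ZMod (κ η),
       (csGraph D Vset u η).Reachable ⟨r, x⟩ ⟨η, k⟩ ∧
       (csGraph D Vset u η).Reachable ⟨r, y⟩ ⟨η, k⟩) ↔
    (x.val : ZMod (κ η)) = (y.val : ZMod (κ η)) := by
  have hpos : ∀ p, 1 ≤ p → p ≤ η → 0 < κ p := fun p hp1 hp2 =>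
    (hκ p hp1 hp2).pos
      ((hD.nonempty p hp1 hp2).exists_eq_singleton_or_nontrivial.resolve_left (hnt p hp1 hp2))
      (hD.strong p hp1 hp2)
  have : NeZero (κ η) := ⟨(hpos η (by omega) le_rfl).ne'⟩
  obtain ⟨c, hc⟩ := exists_InI_offset hD hcong
  have hF : ∀ {a b}, (csGraph D Vset u η).Reachable a b → csPotential c a = csPotential c b :=
    csPotential_eq_of_reachable hpos hdvd hc
  constructor
  · rintro ⟨k, hxk, hyk⟩
    exact add_right_cancel ((hF hxk).trans (hF hyk).symm)
  · intro hxy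
    obtain ⟨kx, hxk⟩ := exists_csGraph_reachable_top (u := u) hD hr1 hr2 x
    obtain ⟨ky, hyk⟩ := exists_csGraph_reachable_top (u := u) hD hr1 hr2 y
    have hk : csPotential c ⟨η, kx⟩ = csPotential c ⟨η, ky⟩ := calc
      _ = csPotential c ⟨r, x⟩ := (hF hxk).symm
      _ = csPotential c ⟨r, y⟩ := by simp only [csPotential, hxy]
      _ = _ := hF hyk
    simp only [csPotential, add_left_inj, ZMod.natCast_zmod_val] at hk
    exact ⟨kx, hxk, hk ▸ hyk⟩

open Digraph' in
/-- under the divisibility/difference conditions, two classes `x, y` of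
`ZMod κ_r` reach a common vertex of the last part of the CS-graph iff their reductions
mod `κ_η` agree. -/
theorem stmt10 {V : Type*} [Fintype V] (D : Digraph' V) (η : ℕ) (Vset : ℕ → Set V)
    (hD : D.IsLinConn η Vset) (hη : 2 ≤ η)
    (hnt : ∀ i, 1 ≤ i → i ≤ η → ¬ IsTrivialComp (Vset i))
    (κ : ℕ → ℕ) (u : ∀ i : ℕ, V → ZMod (κ i))
    (hκ : ∀ i, 1 ≤ i → i ≤ η → IsImprimIndex D (Vset i) (κ i))
    (hu : ∀ i, 1 ≤ i → i ≤ η → IsImprimLabelling D (Vset i) (u i))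
    (hdvd : ∀ p, 1 ≤ p → p ≤ η → κ η ∣ κ p)
    (hcong : ∀ p, 1 ≤ p → p + 1 ≤ η →
      ∀ (i : ZMod (κ p)) (j : ZMod (κ (p + 1))) (i' : ZMod (κ p)) (j' : ZMod (κ (p + 1))),
        InI D Vset u p i j → InI D Vset u p i' j' →
        (i.val : ZMod (κ η)) - (j.val : ZMod (κ η)) =
          (i'.val : ZMod (κ η)) - (j'.val : ZMod (κ η)))
    (r : ℕ) (hr1 : 1 ≤ r) (hr2 : r ≤ η) (x y : ZMod (κ r)) :
    (∃ k : ZMod (κ η),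
       (csGraph D Vset u η).Reachable ⟨r, x⟩ ⟨η, k⟩ ∧
       (csGraph D Vset u η).Reachable ⟨r, y⟩ ⟨η, k⟩) ↔
    (x.val : ZMod (κ η)) = (y.val : ZMod (κ η)) :=
  stmt10_general D η Vset hD hnt κ u hκ hdvd hcong r hr1 hr2 x y
end
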